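/- Let f : ℝⁿ → ℝ be a PLQ function and X ⊆ ℝⁿ a polyhedron. Then the problem min_{x∈X} f(x) has only finitely many isolated local minimizers (equivalently, strict local minimizers, equivalently strong local minimizers). -/
import Mathlib


open Filter Topology Set

noncomputable section

/-- Euclidean norm on `Fin n → ℝ`. -/
def n2 {n : ℕ} (v : Fin n → ℝ) : ℝ := Real.sqrt (∑ i, v i ^ 2)

/-- A polyhedron `{x : Ax ≤ b}`. -/
def IsPolyhedron {n : ℕ} (S : Set (Fin n → ℝ)) : Prop :=
  ∃ (m : ℕ) (A : Matrix (Fin m) (Fin n) ℝ) (b : Fin m → ℝ),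
    S = {x | ∀ i, (∑ j, A i j * x j) ≤ b i}

/-- Local minimizer of `f` on `X`. -/
def IsLocMin' {n : ℕ} (f : (Fin n → ℝ) → ℝ) (X : Set (Fin n → ℝ)) (xbar : Fin n → ℝ) : Prop :=
  xbar ∈ X ∧ ∃ ε > (0:ℝ), ∀ y ∈ X, n2 (y - xbar) < ε → f xbar ≤ f y

/-- Strict local minimizer of `f` on `X`. -/
def IsStrictLocMin {n : ℕ} (f : (Fin n → ℝ) → ℝ) (X : Set (Fin n → ℝ)) (xbar : Fin n → ℝ) : Prop :=
  xbar ∈ X ∧ ∃ ε > (0:ℝ), ∀ y ∈ X, n2 (y - xbar) < ε → y ≠ xbar → f xbar < f y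

/-- Strong local minimizer of `f` on `X`. -/
def IsStrongLocMin {n : ℕ} (f : (Fin n → ℝ) → ℝ) (X : Set (Fin n → ℝ)) (xbar : Fin n → ℝ) : Prop :=
  xbar ∈ X ∧ ∃ c > (0:ℝ), ∃ ε > (0:ℝ), ∀ y ∈ X, n2 (y - xbar) < ε →
    f xbar + c * n2 (y - xbar) ^ 2 ≤ f y

/-- Isolated local minimizer of `f` on `X`. -/
def IsIsolatedLocMin {n : ℕ} (f : (Fin n → ℝ) → ℝ) (X : Set (Fin n → ℝ)) (xbar : Fin n → ℝ) : Prop :=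
  IsLocMin' f X xbar ∧ ∃ ε > (0:ℝ), ∀ y, IsLocMin' f X y → n2 (y - xbar) < ε → y = xbar



lemma n2_eq_norm {n : ℕ} (v : Fin n → ℝ) :
    n2 v = ‖(WithLp.equiv 2 (Fin n → ℝ)).symm v‖ := by
  rw [EuclideanSpace.norm_eq]
  simp [n2, Real.norm_eq_abs, sq_abs]

lemma n2_smul {n : ℕ} (t : ℝ) (v : Fin n → ℝ) : n2 (t • v) = |t| * n2 v := by
  rw [n2_eq_norm, n2_eq_norm, ← Real.norm_eq_abs]
  rw [show (WithLp.equiv 2 (Fin n → ℝ)).symm (t • v)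
      = t • (WithLp.equiv 2 (Fin n → ℝ)).symm v from rfl]
  exact norm_smul t _

lemma n2_pos {n : ℕ} {v : Fin n → ℝ} (hv : v ≠ 0) : 0 < n2 v := by
  rw [n2_eq_norm, norm_pos_iff]
  intro h
  apply hv
  have := congrArg (WithLp.equiv 2 (Fin n → ℝ)) h
  simpa using this

lemma small_pos_zero {a b : ℝ}
    (h : ∃ δ > (0:ℝ), ∀ t : ℝ, |t| < δ → t ≠ 0 → 0 < a * t ^ 2 + b * t) :
    b = 0 ∧ 0 < a := by
  obtain ⟨δ, hδ, h⟩ := h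
  have key : ∀ ε : ℝ, 0 < ε → ε < δ → (0 < a * ε ^ 2 + b * ε ∧ 0 < a * ε ^ 2 - b * ε) := by
    intro ε hε hεδ
    constructor
    · have := h ε (by rwa [abs_of_pos hε]) hε.ne'
      linarith
    · have := h (-ε) (by rwa [abs_neg, abs_of_pos hε]) (by simpa using hε.ne')
      nlinarith
  have hb : b = 0 := by
    by_contra hb
    have hbpos : 0 < |b| := abs_pos.mpr hb
    set ε : ℝ := min (δ/2) (|b| / (2 * (|a| + 1))) with hε
    have hεpos : 0 < ε := lt_min (by linarith) (by positivity)
    have hεδ : ε < δ := lt_of_le_of_lt (min_le_left _ _) (by linarith)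
    obtain ⟨k1, k2⟩ := key ε hεpos hεδ
    have hεle : ε ≤ |b| / (2 * (|a| + 1)) := min_le_right _ _
    have h3 : |a| * ε < |b| := by
      have h5 : |a| * ε ≤ |a| * (|b| / (2 * (|a| + 1))) :=
        mul_le_mul_of_nonneg_left hεle (abs_nonneg a)
      have h4 : |a| * (|b| / (2 * (|a| + 1))) < |b| := by
        rw [mul_div_assoc', div_lt_iff₀ (by positivity)]
        nlinarith [abs_nonneg a, hbpos]
      linarith
    have hat : a * ε ^ 2 ≤ |a| * ε ^ 2 := by nlinarith [le_abs_self a, sq_nonneg ε]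
    rcases abs_cases b with ⟨hb1, _⟩ | ⟨hb1, _⟩ <;> nlinarith
  refine ⟨hb, ?_⟩
  obtain ⟨k1, _⟩ := key (δ/2) (by linarith) (by linarith)
  rw [hb] at k1
  nlinarith

lemma quad_expand {n : ℕ} (Q : Matrix (Fin n) (Fin n) ℝ) (c : Fin n → ℝ) (α : ℝ)
    (x d : Fin n → ℝ) :
    ∃ a b : ℝ, ∀ t : ℝ,
      (1/2) * (∑ k, ∑ l, Q k l * (x + t • d) k * (x + t • d) l)
        + (∑ k, c k * (x + t • d) k) + α
      = a * t ^ 2 + b * t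
        + ((1/2) * (∑ k, ∑ l, Q k l * x k * x l) + (∑ k, c k * x k) + α) := by
  refine ⟨(1/2) * ∑ k, ∑ l, Q k l * d k * d l,
    (1/2) * (∑ k, ∑ l, Q k l * (x k * d l + d k * x l)) + ∑ k, c k * d k, fun t => ?_⟩
  have h1 : ∀ k l, Q k l * (x + t • d) k * (x + t • d) l
      = Q k l * x k * x l + t * (Q k l * (x k * d l + d k * x l))
        + t ^ 2 * (Q k l * d k * d l) := by
    intro k l
    simp only [Pi.add_apply, Pi.smul_apply, smul_eq_mul]
    ring
  have h2 : ∀ k, c k * (x + t • d) k = c k * x k + t * (c k * d k) := by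
    intro k
    simp only [Pi.add_apply, Pi.smul_apply, smul_eq_mul]
    ring
  simp only [h1, h2, Finset.sum_add_distrib, ← Finset.mul_sum]
  ring

lemma constr_line {n m : ℕ} (A : Matrix (Fin m) (Fin n) ℝ) (b : Fin m → ℝ)
    (x d : Fin n → ℝ) (hx : ∀ k, (∑ j, A k j * x j) ≤ b k)
    (hd : ∀ k, (∑ j, A k j * x j) = b k → (∑ j, A k j * d j) = 0) :
    ∀ᶠ t : ℝ in 𝓝 0, ∀ k, (∑ j, A k j * (x + t • d) j) ≤ b k := by
  rw [eventually_all]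
  intro k
  have hlin : ∀ t : ℝ, (∑ j, A k j * (x + t • d) j)
      = (∑ j, A k j * x j) + t * (∑ j, A k j * d j) := by
    intro t
    simp only [Pi.add_apply, Pi.smul_apply, smul_eq_mul, mul_add, Finset.sum_add_distrib,
      Finset.mul_sum]
    congr 1
    exact Finset.sum_congr rfl fun j _ => by ring
  simp only [hlin]
  rcases eq_or_lt_of_le (hx k) with heq | hlt
  · have := hd k heq
    simp [this, heq]
  · have hc : Continuous fun t : ℝ => (∑ j, A k j * x j) + t * (∑ j, A k j * d j) := by
      continuity
    have : ∀ᶠ t : ℝ in 𝓝 0, ((∑ j, A k j * x j) + t * (∑ j, A k j * d j)) < b k := by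
      have h0 : ((∑ j, A k j * x j) + (0:ℝ) * (∑ j, A k j * d j)) < b k := by simpa using hlt
      exact (hc.continuousAt (x := (0:ℝ))).eventually_lt continuousAt_const h0
    exact this.mono fun t ht => ht.le

lemma sum_sub_lin {n m : ℕ} (A : Matrix (Fin m) (Fin n) ℝ) (x y : Fin n → ℝ) (k : Fin m) :
    (∑ j, A k j * (y - x) j) = (∑ j, A k j * y j) - (∑ j, A k j * x j) := by
  simp [Pi.sub_apply, mul_sub, Finset.sum_sub_distrib]

/-- Two strict local minimizers sharing a piece and active sets coincide. -/
lemma key_unique {n m1 m2 : ℕ} (A1 : Matrix (Fin m1) (Fin n) ℝ) (b1 : Fin m1 → ℝ)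
    (A2 : Matrix (Fin m2) (Fin n) ℝ) (b2 : Fin m2 → ℝ)
    (f : (Fin n → ℝ) → ℝ) (Q : Matrix (Fin n) (Fin n) ℝ) (c : Fin n → ℝ) (α : ℝ)
    (hfq : ∀ z, (∀ k, (∑ j, A2 k j * z j) ≤ b2 k) →
      f z = (1/2) * (∑ k, ∑ l, Q k l * z k * z l) + (∑ k, c k * z k) + α)
    (x y : Fin n → ℝ)
    (hxX : ∀ k, (∑ j, A1 k j * x j) ≤ b1 k) (hxP : ∀ k, (∑ j, A2 k j * x j) ≤ b2 k)
    (hyX : ∀ k, (∑ j, A1 k j * y j) ≤ b1 k) (hyP : ∀ k, (∑ j, A2 k j * y j) ≤ b2 k)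
    (hεx : ∃ ε > (0:ℝ), ∀ z, (∀ k, (∑ j, A1 k j * z j) ≤ b1 k) → n2 (z - x) < ε →
      z ≠ x → f x < f z)
    (hεy : ∃ ε > (0:ℝ), ∀ z, (∀ k, (∑ j, A1 k j * z j) ≤ b1 k) → n2 (z - y) < ε →
      z ≠ y → f y < f z)
    (hact1 : ∀ k, (∑ j, A1 k j * x j) = b1 k ↔ (∑ j, A1 k j * y j) = b1 k)
    (hact2 : ∀ k, (∑ j, A2 k j * x j) = b2 k ↔ (∑ j, A2 k j * y j) = b2 k) :
    x = y := by
  by_contra hxy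
  set d : Fin n → ℝ := y - x with hd
  have hdne : d ≠ 0 := sub_ne_zero.mpr (Ne.symm hxy)
  have hnd : 0 < n2 d := n2_pos hdne
  obtain ⟨a, b, hab⟩ := quad_expand Q c α x d
  obtain ⟨εx, hεx0, hεx⟩ := hεx
  obtain ⟨εy, hεy0, hεy⟩ := hεy
  have hyxd : y = x + d := by simp [hd]
  -- directional derivatives vanish on active constraints, at x
  have hdir1x : ∀ k, (∑ j, A1 k j * x j) = b1 k → (∑ j, A1 k j * d j) = 0 := by
    intro k hk
    rw [hd, sum_sub_lin, (hact1 k).mp hk, hk, sub_self]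
  have hdir2x : ∀ k, (∑ j, A2 k j * x j) = b2 k → (∑ j, A2 k j * d j) = 0 := by
    intro k hk
    rw [hd, sum_sub_lin, (hact2 k).mp hk, hk, sub_self]
  have hdir1y : ∀ k, (∑ j, A1 k j * y j) = b1 k → (∑ j, A1 k j * d j) = 0 := by
    intro k hk
    rw [hd, sum_sub_lin, hk, (hact1 k).mpr hk, sub_self]
  have hdir2y : ∀ k, (∑ j, A2 k j * y j) = b2 k → (∑ j, A2 k j * d j) = 0 := by
    intro k hk
    rw [hd, sum_sub_lin, hk, (hact2 k).mpr hk, sub_self]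
  -- smallness eventually
  have hsmall : ∀ ε : ℝ, 0 < ε → ∀ᶠ t : ℝ in 𝓝 0, |t| * n2 d < ε := by
    intro ε hε
    have hc : Continuous fun t : ℝ => |t| * n2 d := continuous_abs.mul continuous_const
    have h0 : |(0:ℝ)| * n2 d < ε := by simpa using hε
    exact (hc.continuousAt (x := (0:ℝ))).eventually_lt continuousAt_const h0
  -- the quadratic value identity on the piece
  have hval : ∀ t : ℝ, (∀ k, (∑ j, A2 k j * (x + t • d) j) ≤ b2 k) →
      f (x + t • d) = a * t ^ 2 + b * t + f x := by
    intro t ht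
    rw [hfq _ ht, hab t, hfq x hxP]
  -- Part 1 : at x
  have part1 : b = 0 ∧ 0 < a := by
    apply small_pos_zero
    have hev : ∀ᶠ t : ℝ in 𝓝 0,
        ((∀ k, (∑ j, A1 k j * (x + t • d) j) ≤ b1 k) ∧
         (∀ k, (∑ j, A2 k j * (x + t • d) j) ≤ b2 k)) ∧ |t| * n2 d < εx :=
      ((constr_line A1 b1 x d hxX hdir1x).and (constr_line A2 b2 x d hxP hdir2x)).and
        (hsmall εx hεx0)
    rw [Metric.eventually_nhds_iff] at hev
    obtain ⟨δ, hδ, hev⟩ := hev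
    refine ⟨δ, hδ, fun t ht htne => ?_⟩
    have h1 := hev (by simpa [Real.dist_eq] using ht)
    obtain ⟨⟨hm1, hm2⟩, hsm⟩ := h1
    have hzx : x + t • d - x = t • d := by abel
    have hne : x + t • d ≠ x := by
      intro h
      have : t • d = 0 := by
        have := congrArg (fun z => z - x) h
        simpa [hzx] using this
      rcases smul_eq_zero.mp this with h' | h'
      · exact htne h'
      · exact hdne h'
    have hlt := hεx (x + t • d) hm1 (by rw [hzx, n2_smul]; exact hsm) hne
    rw [hval t hm2] at hlt
    linarith
  -- Part 2 : at y
  have part2 : 2 * a + b = 0 ∧ 0 < a := by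
    apply small_pos_zero
    have hev : ∀ᶠ s : ℝ in 𝓝 0,
        ((∀ k, (∑ j, A1 k j * (y + s • d) j) ≤ b1 k) ∧
         (∀ k, (∑ j, A2 k j * (y + s • d) j) ≤ b2 k)) ∧ |s| * n2 d < εy :=
      ((constr_line A1 b1 y d hyX hdir1y).and (constr_line A2 b2 y d hyP hdir2y)).and
        (hsmall εy hεy0)
    rw [Metric.eventually_nhds_iff] at hev
    obtain ⟨δ, hδ, hev⟩ := hev
    refine ⟨min δ 1, lt_min hδ one_pos, fun s hs hsne => ?_⟩
    have h1 := hev (by simpa [Real.dist_eq] using lt_of_lt_of_le hs (min_le_left _ _))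
    obtain ⟨⟨hm1, hm2⟩, hsm⟩ := h1
    have hzy : y + s • d - y = s • d := by abel
    have hne : y + s • d ≠ y := by
      intro h
      have : s • d = 0 := by
        have := congrArg (fun z => z - y) h
        simpa [hzy] using this
      rcases smul_eq_zero.mp this with h' | h'
      · exact hsne h'
      · exact hdne h'
    have hlt := hεy (y + s • d) hm1 (by rw [hzy, n2_smul]; exact hsm) hne
    have hys : y + s • d = x + (1 + s) • d := by
      rw [hyxd]
      funext j
      simp only [Pi.add_apply, Pi.smul_apply, smul_eq_mul]
      ring
    have hm2' : ∀ k, (∑ j, A2 k j * (x + (1 + s) • d) j) ≤ b2 k := by rw [← hys]; exact hm2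
    have hfy : f y = a + b + f x := by
      have h1 : y = x + (1:ℝ) • d := by rw [hyxd]; simp
      rw [h1, hval 1 (by rw [← h1]; exact hyP)]
      ring_nf
    rw [hys, hval (1 + s) hm2', hfy] at hlt
    nlinarith [hlt]
  obtain ⟨hb0, ha0⟩ := part1
  obtain ⟨h2ab, _⟩ := part2
  rw [hb0] at h2ab
  linarith

lemma n2_triangle {n : ℕ} (u v : Fin n → ℝ) : n2 (u + v) ≤ n2 u + n2 v := by
  simp only [n2_eq_norm]
  rw [show (WithLp.equiv 2 (Fin n → ℝ)).symm (u + v)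
      = (WithLp.equiv 2 (Fin n → ℝ)).symm u + (WithLp.equiv 2 (Fin n → ℝ)).symm v from rfl]
  exact norm_add_le _ _

lemma iso_to_strict {n : ℕ} {f : (Fin n → ℝ) → ℝ} {X : Set (Fin n → ℝ)} {x : Fin n → ℝ}
    (h : IsIsolatedLocMin f X x) : IsStrictLocMin f X x := by
  obtain ⟨⟨hxX, ε1, hε1, hmin⟩, ε2, hε2, hiso⟩ := h
  refine ⟨hxX, min ε1 ε2, lt_min hε1 hε2, fun y hyX hyn hyne => ?_⟩
  have hy1 : n2 (y - x) < ε1 := lt_of_lt_of_le hyn (min_le_left _ _)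
  have h1 : f x ≤ f y := hmin y hyX hy1
  rcases eq_or_lt_of_le h1 with heq | h
  · exfalso
    have hyloc : IsLocMin' f X y := by
      refine ⟨hyX, ε1 - n2 (y - x), by linarith, fun z hzX hzn => ?_⟩
      have htr : n2 (z - x) ≤ n2 (z - y) + n2 (y - x) := by
        have : z - x = (z - y) + (y - x) := by abel
        rw [this]; exact n2_triangle _ _
      have : n2 (z - x) < ε1 := by linarith
      have := hmin z hzX this
      linarith [heq]
    exact hyne (hiso y hyloc (lt_of_lt_of_le hyn (min_le_right _ _)))
  · exact h

lemma strong_to_strict {n : ℕ} {f : (Fin n → ℝ) → ℝ} {X : Set (Fin n → ℝ)} {x : Fin n → ℝ}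
    (h : IsStrongLocMin f X x) : IsStrictLocMin f X x := by
  obtain ⟨hxX, c, hc, ε, hε, h⟩ := h
  refine ⟨hxX, ε, hε, fun y hyX hyn hyne => ?_⟩
  have := h y hyX hyn
  have hpos : 0 < n2 (y - x) := n2_pos (sub_ne_zero.mpr hyne)
  nlinarith [mul_pos hc (pow_pos hpos 2)]


/-- For a PLQ function `f` on `ℝⁿ` (with polyhedral pieces `P i` covering
`ℝⁿ`, on each of which `f` agrees with a quadratic) and a polyhedron `X`, the problem
`min_{x∈X} f(x)` has only finitely many isolated (equivalently strict, equivalently strong)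
local minimizers. -/
theorem stmt14 {n I : ℕ} (f : (Fin n → ℝ) → ℝ) (hf : Continuous f)
    (P : Fin I → Set (Fin n → ℝ)) (hP : ∀ i, IsPolyhedron (P i))
    (hcover : (⋃ i, P i) = Set.univ)
    (Qm : Fin I → Matrix (Fin n) (Fin n) ℝ) (hQ : ∀ i k l, Qm i k l = Qm i l k)
    (c : Fin I → Fin n → ℝ) (α : Fin I → ℝ)
    (hfq : ∀ i, ∀ x ∈ P i,
      f x = (1/2) * (∑ k, ∑ l, Qm i k l * x k * x l) + (∑ k, c i k * x k) + α i)
    (X : Set (Fin n → ℝ)) (hX : IsPolyhedron X) :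
    {x | IsIsolatedLocMin f X x}.Finite ∧
    {x | IsStrictLocMin f X x}.Finite ∧
    {x | IsStrongLocMin f X x}.Finite := by
  classical
  obtain ⟨m0, A0, b0, hX0⟩ := hX
  choose m A bb hPe using hP
  have hstrict : {x | IsStrictLocMin f X x}.Finite := by
    have hsub : {x | IsStrictLocMin f X x} ⊆
        ⋃ i, {x | IsStrictLocMin f X x ∧ x ∈ P i} := by
      intro x hx
      have hxu : x ∈ ⋃ i, P i := by rw [hcover]; trivial
      obtain ⟨i, hi⟩ := mem_iUnion.mp hxu
      exact mem_iUnion.mpr ⟨i, hx, hi⟩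
    refine Set.Finite.subset (Set.finite_iUnion fun i => ?_) hsub
    rw [← Set.finite_coe_iff]
    apply Finite.of_injective (β := Finset (Fin m0) × Finset (Fin (m i)))
      (fun (x : {x | IsStrictLocMin f X x ∧ x ∈ P i}) =>
        (Finset.univ.filter (fun k => (∑ j, A0 k j * x.1 j) = b0 k),
         Finset.univ.filter (fun k => (∑ j, A i k j * x.1 j) = bb i k)))
    rintro ⟨x, hxS, hxP⟩ ⟨y, hyS, hyP⟩ hxy
    apply Subtype.ext
    simp only [Prod.mk.injEq] at hxy
    obtain ⟨hxy1, hxy2⟩ := hxy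
    have hact1 : ∀ k, (∑ j, A0 k j * x j) = b0 k ↔ (∑ j, A0 k j * y j) = b0 k := by
      intro k
      have := Finset.ext_iff.mp hxy1 k
      simpa using this
    have hact2 : ∀ k, (∑ j, A i k j * x j) = bb i k ↔ (∑ j, A i k j * y j) = bb i k := by
      intro k
      have := Finset.ext_iff.mp hxy2 k
      simpa using this
    have hmemX : ∀ z : Fin n → ℝ, z ∈ X ↔ ∀ k, (∑ j, A0 k j * z j) ≤ b0 k := by
      intro z; rw [hX0]; exact Iff.rfl
    have hmemP : ∀ z : Fin n → ℝ, z ∈ P i ↔ ∀ k, (∑ j, A i k j * z j) ≤ bb i k := by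
      intro z; rw [hPe i]; exact Iff.rfl
    obtain ⟨hxX, εx, hεx0, hεx⟩ := hxS
    obtain ⟨hyX, εy, hεy0, hεy⟩ := hyS
    exact key_unique A0 b0 (A i) (bb i) f (Qm i) (c i) (α i)
      (fun z hz => hfq i z ((hmemP z).mpr hz)) x y
      ((hmemX x).mp hxX) ((hmemP x).mp hxP) ((hmemX y).mp hyX) ((hmemP y).mp hyP)
      ⟨εx, hεx0, fun z hz hn hne => hεx z ((hmemX z).mpr hz) hn hne⟩
      ⟨εy, hεy0, fun z hz hn hne => hεy z ((hmemX z).mpr hz) hn hne⟩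
      hact1 hact2
  exact ⟨hstrict.subset fun x hx => iso_to_strict hx,
    hstrict,
    hstrict.subset fun x hx => strong_to_strict hx⟩
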